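/- Let E₁, E₂ be nonlinear resistance forms on disjoint nonempty sets X₁, X₂ with ℝ·1 ⊆ ker E_i, fix ξ₁ ∈ X₁, ξ₂ ∈ X₂ and ε > 0, and define E : F(X₁ ∪ X₂) → [0,∞] by E(f) = E₁(f|_{X₁}) + E₂(f|_{X₂}) + (1/(4ε))·|f(ξ₁) − f(ξ₂)|². Then E is a nonlinear resistance form on X₁ ∪ X₂ with ℝ·1 ⊆ ker E, and for all x₁ ∈ X₁, x₂ ∈ X₂ and t > 0: R_{t,E}(x₁,x₂) = R_{t,E₁}(x₁,ξ₁) + R_{t,E₂}(ξ₂,x₂) + ε·t². -/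

import Mathlib

open scoped ENNReal NNReal

noncomputable section

/-- A `[0,∞]`-valued functional on a real vector space is convex. -/
def ConvexENNReal {W : Type*} [AddCommGroup W] [Module ℝ W] (ρ : W → ℝ≥0∞) : Prop :=
  ∀ (x y : W) (a b : ℝ), 0 ≤ a → 0 ≤ b → a + b = 1 →
    ρ (a • x + b • y) ≤ ENNReal.ofReal a * ρ x + ENNReal.ofReal b * ρ y

/-- The modular cone `M(ρ) = {λ • x : λ ≥ 0, ρ x < ∞}`. -/
def modularCone {W : Type*} [AddCommGroup W] [Module ℝ W] (ρ : W → ℝ≥0∞) : Set W :=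
  {x | ∃ (lam : ℝ) (y : W), 0 ≤ lam ∧ ρ y ≠ ⊤ ∧ x = lam • y}

/-- The Luxemburg functional `‖x‖_L = inf {λ > 0 : ρ (λ⁻¹ x) ≤ 1}` (equal to `∞` outside
the modular cone, where no admissible `λ` exists). -/
noncomputable def luxemburg {W : Type*} [AddCommGroup W] [Module ℝ W]
    (ρ : W → ℝ≥0∞) (x : W) : ℝ≥0∞ :=
  ⨅ (lam : ℝ) (_ : 0 < lam) (_ : ρ (lam⁻¹ • x) ≤ 1), ENNReal.ofReal lam

/-- The elementary resistance `R(x,y) = sup {f x − f y : E f ≤ 1}`. -/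
noncomputable def eRes {X : Type*} (E : (X → ℝ) → ℝ≥0∞) (x y : X) : ℝ≥0∞ :=
  ⨆ (f : X → ℝ) (_ : E f ≤ 1), ENNReal.ofReal (f x - f y)

/-- The elementary resistance between `x` and `∞`: `R_∞(x) = sup {f x : E f ≤ 1}`. -/
noncomputable def eResInf {X : Type*} (E : (X → ℝ) → ℝ≥0∞) (x : X) : ℝ≥0∞ :=
  ⨆ (f : X → ℝ) (_ : E f ≤ 1), ENNReal.ofReal (f x)

/-- The `t`-resistance `R_t(x,y) = sup_f ( t (f x − f y) − E f )`. -/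
noncomputable def tRes {X : Type*} (E : (X → ℝ) → ℝ≥0∞) (t : ℝ) (x y : X) : ℝ≥0∞ :=
  ⨆ f : X → ℝ, ENNReal.ofReal (t * (f x - f y)) - E f

/-- The `t`-resistance between `x` and `∞`: `R_{t,∞}(x) = sup_f ( t f x − E f )`. -/
noncomputable def tResInf {X : Type*} (E : (X → ℝ) → ℝ≥0∞) (t : ℝ) (x : X) : ℝ≥0∞ :=
  ⨆ f : X → ℝ, ENNReal.ofReal (t * f x) - E f

/-- A normal contraction `C` operates on `E` (`E` is compatible with `C`). -/
def Operates {X : Type*} (C : ℝ → ℝ) (E : (X → ℝ) → ℝ≥0∞) : Prop :=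
  ∀ f g : X → ℝ, E (f + C ∘ g) + E (f - C ∘ g) ≤ E (f + g) + E (f - g)

/-- A nonlinear resistance form: convex with `E 0 = 0`, lower semicontinuous w.r.t. pointwise
convergence, finite elementary resistance, and all normal contractions operate on `E`. -/
def IsNonlinearResistanceForm {X : Type*} (E : (X → ℝ) → ℝ≥0∞) : Prop :=
  ConvexENNReal E ∧ E 0 = 0 ∧ LowerSemicontinuous E ∧
    (∀ x y : X, eRes E x y ≠ ⊤) ∧
    (∀ C : ℝ → ℝ, LipschitzWith 1 C → C 0 = 0 → Operates C E)

/-- Auxiliary: a convex, lower semicontinuous functional vanishing on constants can only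
decrease under adding a constant. -/
lemma shift_le_aux {X : Type*} (E : (X → ℝ) → ℝ≥0∞) (hconv : ConvexENNReal E)
    (hlsc : LowerSemicontinuous E) (hc : ∀ c : ℝ, E (fun _ => c) = 0)
    (f : X → ℝ) (c : ℝ) : E (fun x => f x + c) ≤ E f := by
  have key : ∀ l : ℝ, 0 < l → l < 1 → E (fun x => l * (f x + c)) ≤ E f := by
    intro l hl0 hl1
    have h1 : (0:ℝ) < 1 - l := by linarith
    have heq : (fun x => l * (f x + c)) =
        l • f + (1 - l) • (fun _ : X => l * c / (1 - l)) := by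
      funext x
      simp only [Pi.add_apply, Pi.smul_apply, smul_eq_mul]
      field_simp
    rw [heq]
    calc E _ ≤ ENNReal.ofReal l * E f + ENNReal.ofReal (1-l) * E (fun _ => l*c/(1-l)) :=
          hconv f _ l (1-l) hl0.le h1.le (by ring)
      _ = ENNReal.ofReal l * E f := by rw [hc]; simp
      _ ≤ 1 * E f := by gcongr; exact ENNReal.ofReal_le_one.mpr hl1.le
      _ = E f := one_mul _
  by_contra hgt
  push_neg at hgt
  have hlsc' := hlsc (fun x => f x + c) (E f) hgt
  have htend : Filter.Tendsto (fun n : ℕ => fun x => (1 - 1/((n:ℝ)+2)) * (f x + c))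
      Filter.atTop (nhds (fun x => f x + c)) := by
    rw [tendsto_pi_nhds]
    intro x
    have h0 : Filter.Tendsto (fun n : ℕ => 1/((n:ℝ)+2)) Filter.atTop (nhds 0) := by
      have := (tendsto_one_div_add_atTop_nhds_zero_nat (𝕜 := ℝ)).comp
        (Filter.tendsto_add_atTop_nat 1)
      convert this using 2 with n
      simp [Function.comp]
      ring
    have : Filter.Tendsto (fun n : ℕ => (1 - 1/((n:ℝ)+2)) * (f x + c))
        Filter.atTop (nhds ((1 - 0) * (f x + c))) :=
      ((tendsto_const_nhds.sub h0).mul tendsto_const_nhds)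
    simpa using this
  obtain ⟨n, hn⟩ := (htend.eventually hlsc').exists
  have h2 : (0:ℝ) < 1 - 1/((n:ℝ)+2) := by
    have : 1/((n:ℝ)+2) < 1 := by
      rw [div_lt_one (by positivity)]
      linarith [Nat.cast_nonneg (α := ℝ) n]
    linarith
  have h3 : 1 - 1/((n:ℝ)+2) < 1 := by
    have : 0 < 1/((n:ℝ)+2) := by positivity
    linarith
  exact absurd (key _ h2 h3) (not_le.mpr hn)

/-- Auxiliary: translation invariance of a convex, lower semicontinuous functional
vanishing on constants. -/
lemma shift_eq_aux {X : Type*} (E : (X → ℝ) → ℝ≥0∞) (hconv : ConvexENNReal E)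
    (hlsc : LowerSemicontinuous E) (hc : ∀ c : ℝ, E (fun _ => c) = 0)
    (f : X → ℝ) (c : ℝ) : E (fun x => f x + c) = E f := by
  refine le_antisymm (shift_le_aux E hconv hlsc hc f c) ?_
  have h := shift_le_aux E hconv hlsc hc (fun x => f x + c) (-c)
  have h2 : (fun x => (f x + c) + (-c)) = f := by funext x; ring
  rwa [h2] at h

/-- Auxiliary: a lower semicontinuous function composed with a continuous map is lower
semicontinuous. -/
lemma lsc_comp_aux {α β : Type*} [TopologicalSpace α] [TopologicalSpace β]
    (F : β → ℝ≥0∞) (g : α → β) (hF : LowerSemicontinuous F) (hg : Continuous g) :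
    LowerSemicontinuous fun a => F (g a) := by
  intro x yv hyv
  exact (hg.tendsto x).eventually (hF (g x) yv hyv)

/-- **Additivity over serial circuits II** (Theorem 4.17): connecting two nonlinear
resistance forms by a single resistor of strength `1/(4ε)` between the marked points yields
a nonlinear resistance form whose `t`-resistance is additive with an extra term `ε t²`. -/
theorem additivity_serial_circuits_II {X₁ X₂ : Type*}
    (E₁ : (X₁ → ℝ) → ℝ≥0∞) (E₂ : (X₂ → ℝ) → ℝ≥0∞)
    (hE₁ : IsNonlinearResistanceForm E₁) (hE₂ : IsNonlinearResistanceForm E₂)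
    (hc₁ : ∀ c : ℝ, E₁ (fun _ => c) = 0) (hc₂ : ∀ c : ℝ, E₂ (fun _ => c) = 0)
    (ξ₁ : X₁) (ξ₂ : X₂) (ε : ℝ) (hε : 0 < ε)
    (E : ((X₁ ⊕ X₂) → ℝ) → ℝ≥0∞)
    (hE : ∀ f : (X₁ ⊕ X₂) → ℝ,
      E f = E₁ (f ∘ Sum.inl) + E₂ (f ∘ Sum.inr) +
        ENNReal.ofReal ((1 / (4 * ε)) * |f (Sum.inl ξ₁) - f (Sum.inr ξ₂)| ^ 2)) :
    IsNonlinearResistanceForm E ∧ (∀ c : ℝ, E (fun _ => c) = 0) ∧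
    (∀ (x₁ : X₁) (x₂ : X₂) (t : ℝ), 0 < t →
      tRes E t (Sum.inl x₁) (Sum.inr x₂) =
        tRes E₁ t x₁ ξ₁ + tRes E₂ t ξ₂ x₂ + ENNReal.ofReal (ε * t ^ 2)) := by
  obtain ⟨hconv₁, hz₁, hlsc₁, hfin₁, hop₁⟩ := hE₁
  obtain ⟨hconv₂, hz₂, hlsc₂, hfin₂, hop₂⟩ := hE₂
  have h4ε : (0:ℝ) < 4*ε := by linarith
  have hk : (0:ℝ) ≤ 1/(4*ε) := by positivity
  -- constants vanish
  have hconst : ∀ c : ℝ, E (fun _ => c) = 0 := by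
    intro c
    rw [hE]
    have h1 : ((fun _ : X₁ ⊕ X₂ => c) ∘ Sum.inl) = (fun _ : X₁ => c) := rfl
    have h2 : ((fun _ : X₁ ⊕ X₂ => c) ∘ Sum.inr) = (fun _ : X₂ => c) := rfl
    rw [h1, h2, hc₁, hc₂]
    simp
  -- convexity
  have hconvE : ConvexENNReal E := by
    intro x y a b ha hb hab
    rw [hE, hE, hE]
    have h1 : (a • x + b • y) ∘ Sum.inl = a • (x ∘ Sum.inl) + b • (y ∘ Sum.inl) := rfl
    have h2 : (a • x + b • y) ∘ Sum.inr = a • (x ∘ Sum.inr) + b • (y ∘ Sum.inr) := rfl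
    rw [h1, h2]
    have hA := hconv₁ (x ∘ Sum.inl) (y ∘ Sum.inl) a b ha hb hab
    have hB := hconv₂ (x ∘ Sum.inr) (y ∘ Sum.inr) a b ha hb hab
    have h3 : (a • x + b • y) (Sum.inl ξ₁) - (a • x + b • y) (Sum.inr ξ₂) =
        a*(x (Sum.inl ξ₁) - x (Sum.inr ξ₂)) + b*(y (Sum.inl ξ₁) - y (Sum.inr ξ₂)) := by
      simp only [Pi.add_apply, Pi.smul_apply, smul_eq_mul]; ring
    rw [h3]
    have hq : ENNReal.ofReal (1/(4*ε) *
          |a*(x (Sum.inl ξ₁) - x (Sum.inr ξ₂)) + b*(y (Sum.inl ξ₁) - y (Sum.inr ξ₂))|^2) ≤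
        ENNReal.ofReal a * ENNReal.ofReal (1/(4*ε) * |x (Sum.inl ξ₁) - x (Sum.inr ξ₂)|^2)
        + ENNReal.ofReal b * ENNReal.ofReal (1/(4*ε) * |y (Sum.inl ξ₁) - y (Sum.inr ξ₂)|^2) := by
      rw [← ENNReal.ofReal_mul ha, ← ENNReal.ofReal_mul hb,
        ← ENNReal.ofReal_add (by positivity) (by positivity)]
      apply ENNReal.ofReal_le_ofReal
      set u := x (Sum.inl ξ₁) - x (Sum.inr ξ₂)
      set v := y (Sum.inl ξ₁) - y (Sum.inr ξ₂)
      rw [sq_abs, sq_abs, sq_abs]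
      have hcx : (a*u+b*v)^2 ≤ a*u^2 + b*v^2 := by
        nlinarith [sq_nonneg (u - v), mul_nonneg ha hb]
      calc 1/(4*ε) * (a*u+b*v)^2 ≤ 1/(4*ε) * (a*u^2 + b*v^2) :=
            mul_le_mul_of_nonneg_left hcx hk
        _ = a * (1/(4*ε)*u^2) + b * (1/(4*ε)*v^2) := by ring
    refine le_trans (add_le_add (add_le_add hA hB) hq) (le_of_eq ?_)
    ring
  -- zero
  have hE0 : E 0 = 0 := by
    have h0 : (0 : (X₁ ⊕ X₂) → ℝ) = (fun _ => (0:ℝ)) := rfl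
    rw [h0, hconst]
  -- lower semicontinuity
  have hlscE : LowerSemicontinuous E := by
    have hEeq : E = fun f => E₁ (f ∘ Sum.inl) + E₂ (f ∘ Sum.inr) +
        ENNReal.ofReal ((1 / (4 * ε)) * |f (Sum.inl ξ₁) - f (Sum.inr ξ₂)| ^ 2) :=
      funext hE
    rw [hEeq]
    apply LowerSemicontinuous.add
    · apply LowerSemicontinuous.add
      · exact lsc_comp_aux E₁ (fun f => f ∘ Sum.inl) hlsc₁
          (continuous_pi fun i => continuous_apply _)
      · exact lsc_comp_aux E₂ (fun f => f ∘ Sum.inr) hlsc₂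
          (continuous_pi fun i => continuous_apply _)
    · apply Continuous.lowerSemicontinuous
      apply ENNReal.continuous_ofReal.comp
      have hcont : Continuous fun f : (X₁ ⊕ X₂) → ℝ =>
          |f (Sum.inl ξ₁) - f (Sum.inr ξ₂)| := by
        exact ((continuous_apply (Sum.inl ξ₁)).sub (continuous_apply (Sum.inr ξ₂))).abs
      exact continuous_const.mul (hcont.pow 2)
  -- bound for functions with small energy
  have hbound : ∀ f : (X₁ ⊕ X₂) → ℝ, E f ≤ 1 →
      E₁ (f ∘ Sum.inl) ≤ 1 ∧ E₂ (f ∘ Sum.inr) ≤ 1 ∧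
      |f (Sum.inl ξ₁) - f (Sum.inr ξ₂)| ≤ Real.sqrt (4*ε) := by
    intro f hf
    rw [hE] at hf
    refine ⟨le_trans (le_trans le_self_add le_self_add) hf,
      le_trans (le_trans le_add_self le_self_add) hf, ?_⟩
    have hq : ENNReal.ofReal ((1/(4*ε)) * |f (Sum.inl ξ₁) - f (Sum.inr ξ₂)|^2) ≤ 1 :=
      le_trans le_add_self hf
    rw [ENNReal.ofReal_le_one] at hq
    set s := f (Sum.inl ξ₁) - f (Sum.inr ξ₂)
    have hs2 : |s|^2 ≤ 4*ε := by
      have h' := mul_le_mul_of_nonneg_left hq h4ε.le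
      have he : (4*ε) * (1/(4*ε) * |s|^2) = |s|^2 := by field_simp
      rw [he, mul_one] at h'
      exact h'
    calc |s| = Real.sqrt (|s|^2) := by rw [Real.sqrt_sq (abs_nonneg s)]
      _ ≤ Real.sqrt (4*ε) := Real.sqrt_le_sqrt hs2
  -- finiteness of elementary resistances
  have hfinE : ∀ x y : X₁ ⊕ X₂, eRes E x y ≠ ⊤ := by
    have hS : ENNReal.ofReal (Real.sqrt (4*ε)) ≠ ⊤ := ENNReal.ofReal_ne_top
    intro x y
    rcases x with a | a <;> rcases y with b | b
    · refine ne_top_of_le_ne_top (hfin₁ a b) (iSup₂_le fun f hf => ?_)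
      exact le_iSup₂_of_le (f ∘ Sum.inl) (hbound f hf).1 le_rfl
    · refine ne_top_of_le_ne_top (ENNReal.add_ne_top.mpr
        ⟨ENNReal.add_ne_top.mpr ⟨hfin₁ a ξ₁, hS⟩, hfin₂ ξ₂ b⟩) (iSup₂_le fun f hf => ?_)
      obtain ⟨h1, h2, h3⟩ := hbound f hf
      have hsplit : f (Sum.inl a) - f (Sum.inr b) =
          ((f ∘ Sum.inl) a - (f ∘ Sum.inl) ξ₁) + (f (Sum.inl ξ₁) - f (Sum.inr ξ₂))
          + ((f ∘ Sum.inr) ξ₂ - (f ∘ Sum.inr) b) := by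
        simp only [Function.comp_apply]; ring
      rw [hsplit]
      refine le_trans ENNReal.ofReal_add_le (add_le_add
        (le_trans ENNReal.ofReal_add_le (add_le_add ?_ ?_)) ?_)
      · exact le_iSup₂_of_le (f ∘ Sum.inl) h1 le_rfl
      · exact ENNReal.ofReal_le_ofReal (le_trans (le_abs_self _) h3)
      · exact le_iSup₂_of_le (f ∘ Sum.inr) h2 le_rfl
    · refine ne_top_of_le_ne_top (ENNReal.add_ne_top.mpr
        ⟨ENNReal.add_ne_top.mpr ⟨hfin₂ a ξ₂, hS⟩, hfin₁ ξ₁ b⟩) (iSup₂_le fun f hf => ?_)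
      obtain ⟨h1, h2, h3⟩ := hbound f hf
      have hsplit : f (Sum.inr a) - f (Sum.inl b) =
          ((f ∘ Sum.inr) a - (f ∘ Sum.inr) ξ₂) + (f (Sum.inr ξ₂) - f (Sum.inl ξ₁))
          + ((f ∘ Sum.inl) ξ₁ - (f ∘ Sum.inl) b) := by
        simp only [Function.comp_apply]; ring
      rw [hsplit]
      refine le_trans ENNReal.ofReal_add_le (add_le_add
        (le_trans ENNReal.ofReal_add_le (add_le_add ?_ ?_)) ?_)
      · exact le_iSup₂_of_le (f ∘ Sum.inr) h2 le_rfl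
      · refine ENNReal.ofReal_le_ofReal (le_trans (le_abs_self _) ?_)
        rw [abs_sub_comm]
        exact h3
      · exact le_iSup₂_of_le (f ∘ Sum.inl) h1 le_rfl
    · refine ne_top_of_le_ne_top (hfin₂ a b) (iSup₂_le fun f hf => ?_)
      exact le_iSup₂_of_le (f ∘ Sum.inr) (hbound f hf).2.1 le_rfl
  -- contractions operate
  have hopE : ∀ C : ℝ → ℝ, LipschitzWith 1 C → C 0 = 0 → Operates C E := by
    intro C hC hC0 f g
    rw [hE, hE, hE, hE]
    have e1 : (f + C ∘ g) ∘ Sum.inl = (f ∘ Sum.inl) + C ∘ (g ∘ Sum.inl) := rfl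
    have e2 : (f - C ∘ g) ∘ Sum.inl = (f ∘ Sum.inl) - C ∘ (g ∘ Sum.inl) := rfl
    have e3 : (f + g) ∘ Sum.inl = (f ∘ Sum.inl) + (g ∘ Sum.inl) := rfl
    have e4 : (f - g) ∘ Sum.inl = (f ∘ Sum.inl) - (g ∘ Sum.inl) := rfl
    have e5 : (f + C ∘ g) ∘ Sum.inr = (f ∘ Sum.inr) + C ∘ (g ∘ Sum.inr) := rfl
    have e6 : (f - C ∘ g) ∘ Sum.inr = (f ∘ Sum.inr) - C ∘ (g ∘ Sum.inr) := rfl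
    have e7 : (f + g) ∘ Sum.inr = (f ∘ Sum.inr) + (g ∘ Sum.inr) := rfl
    have e8 : (f - g) ∘ Sum.inr = (f ∘ Sum.inr) - (g ∘ Sum.inr) := rfl
    rw [e1, e2, e3, e4, e5, e6, e7, e8]
    have h₁ := hop₁ C hC hC0 (f ∘ Sum.inl) (g ∘ Sum.inl)
    have h₂ := hop₂ C hC hC0 (f ∘ Sum.inr) (g ∘ Sum.inr)
    have q1 : (f + C ∘ g) (Sum.inl ξ₁) - (f + C ∘ g) (Sum.inr ξ₂) =
        (f (Sum.inl ξ₁) - f (Sum.inr ξ₂)) + (C (g (Sum.inl ξ₁)) - C (g (Sum.inr ξ₂))) := by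
      simp only [Pi.add_apply, Function.comp_apply]; ring
    have q2 : (f - C ∘ g) (Sum.inl ξ₁) - (f - C ∘ g) (Sum.inr ξ₂) =
        (f (Sum.inl ξ₁) - f (Sum.inr ξ₂)) - (C (g (Sum.inl ξ₁)) - C (g (Sum.inr ξ₂))) := by
      simp only [Pi.sub_apply, Function.comp_apply]; ring
    have q3 : (f + g) (Sum.inl ξ₁) - (f + g) (Sum.inr ξ₂) =
        (f (Sum.inl ξ₁) - f (Sum.inr ξ₂)) + (g (Sum.inl ξ₁) - g (Sum.inr ξ₂)) := by
      simp only [Pi.add_apply]; ring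
    have q4 : (f - g) (Sum.inl ξ₁) - (f - g) (Sum.inr ξ₂) =
        (f (Sum.inl ξ₁) - f (Sum.inr ξ₂)) - (g (Sum.inl ξ₁) - g (Sum.inr ξ₂)) := by
      simp only [Pi.sub_apply]; ring
    rw [q1, q2, q3, q4]
    have habs : |C (g (Sum.inl ξ₁)) - C (g (Sum.inr ξ₂))| ≤
        |g (Sum.inl ξ₁) - g (Sum.inr ξ₂)| := by
      have hd := hC.dist_le_mul (g (Sum.inl ξ₁)) (g (Sum.inr ξ₂))
      simpa [Real.dist_eq] using hd
    set u := f (Sum.inl ξ₁) - f (Sum.inr ξ₂)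
    set v := g (Sum.inl ξ₁) - g (Sum.inr ξ₂)
    set w := C (g (Sum.inl ξ₁)) - C (g (Sum.inr ξ₂))
    have hw2 : w^2 ≤ v^2 := by
      have hp := pow_le_pow_left₀ (abs_nonneg w) habs 2
      rwa [sq_abs, sq_abs] at hp
    have hq : ENNReal.ofReal (1/(4*ε)*|u+w|^2) + ENNReal.ofReal (1/(4*ε)*|u-w|^2)
        ≤ ENNReal.ofReal (1/(4*ε)*|u+v|^2) + ENNReal.ofReal (1/(4*ε)*|u-v|^2) := by
      rw [← ENNReal.ofReal_add (by positivity) (by positivity),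
          ← ENNReal.ofReal_add (by positivity) (by positivity)]
      apply ENNReal.ofReal_le_ofReal
      rw [sq_abs, sq_abs, sq_abs, sq_abs]
      nlinarith [mul_nonneg hk (sub_nonneg.mpr hw2)]
    refine le_trans (le_of_eq (by ring))
      (le_trans (add_le_add (add_le_add h₁ h₂) hq) (le_of_eq (by ring)))
  -- the t-resistance formula
  have htres : ∀ (x₁ : X₁) (x₂ : X₂) (t : ℝ), 0 < t →
      tRes E t (Sum.inl x₁) (Sum.inr x₂) =
        tRes E₁ t x₁ ξ₁ + tRes E₂ t ξ₂ x₂ + ENNReal.ofReal (ε * t ^ 2) := by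
    intro x₁ x₂ t ht
    apply le_antisymm
    · -- upper bound
      refine iSup_le fun f => ?_
      rw [hE]
      have hsplit : t * (f (Sum.inl x₁) - f (Sum.inr x₂)) =
          t * ((f ∘ Sum.inl) x₁ - (f ∘ Sum.inl) ξ₁)
          + t * ((f ∘ Sum.inr) ξ₂ - (f ∘ Sum.inr) x₂)
          + t * (f (Sum.inl ξ₁) - f (Sum.inr ξ₂)) := by
        simp only [Function.comp_apply]; ring
      rw [hsplit]
      have step1 : ENNReal.ofReal (t * ((f ∘ Sum.inl) x₁ - (f ∘ Sum.inl) ξ₁)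
          + t * ((f ∘ Sum.inr) ξ₂ - (f ∘ Sum.inr) x₂)
          + t * (f (Sum.inl ξ₁) - f (Sum.inr ξ₂))) ≤
          ENNReal.ofReal (t * ((f ∘ Sum.inl) x₁ - (f ∘ Sum.inl) ξ₁))
          + ENNReal.ofReal (t * ((f ∘ Sum.inr) ξ₂ - (f ∘ Sum.inr) x₂))
          + ENNReal.ofReal (t * (f (Sum.inl ξ₁) - f (Sum.inr ξ₂))) :=
        le_trans ENNReal.ofReal_add_le (add_le_add ENNReal.ofReal_add_le le_rfl)
      refine le_trans (tsub_le_tsub_right step1 _) ?_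
      refine le_trans add_tsub_add_le_tsub_add_tsub ?_
      refine le_trans (add_le_add add_tsub_add_le_tsub_add_tsub le_rfl) ?_
      refine add_le_add (add_le_add ?_ ?_) ?_
      · exact le_iSup (fun g : X₁ → ℝ => ENNReal.ofReal (t*(g x₁ - g ξ₁)) - E₁ g)
          (f ∘ Sum.inl)
      · exact le_iSup (fun g : X₂ → ℝ => ENNReal.ofReal (t*(g ξ₂ - g x₂)) - E₂ g)
          (f ∘ Sum.inr)
      · rw [tsub_le_iff_right, ← ENNReal.ofReal_add (by positivity) (by positivity)]
        apply ENNReal.ofReal_le_ofReal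
        set s := f (Sum.inl ξ₁) - f (Sum.inr ξ₂)
        have h1 : ε*t^2 + 1/(4*ε)*|s|^2 - t*s = 1/(4*ε) * (s - 2*ε*t)^2 := by
          rw [sq_abs]; field_simp; ring
        nlinarith [mul_nonneg hk (sq_nonneg (s - 2*ε*t)), h1]
    · -- lower bound
      have core : ∀ (g₁ : X₁ → ℝ) (g₂ : X₂ → ℝ), E₁ g₁ ≠ ⊤ → E₂ g₂ ≠ ⊤ →
          (E₁ g₁).toReal ≤ t*(g₁ x₁ - g₁ ξ₁) → (E₂ g₂).toReal ≤ t*(g₂ ξ₂ - g₂ x₂) →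
          (ENNReal.ofReal (t*(g₁ x₁ - g₁ ξ₁)) - E₁ g₁)
            + (ENNReal.ofReal (t*(g₂ ξ₂ - g₂ x₂)) - E₂ g₂) + ENNReal.ofReal (ε * t ^ 2)
            ≤ tRes E t (Sum.inl x₁) (Sum.inr x₂) := by
        intro g₁ g₂ hfin1 hfin2 hd1 hd2
        have he1 : (0:ℝ) ≤ (E₁ g₁).toReal := ENNReal.toReal_nonneg
        have he2 : (0:ℝ) ≤ (E₂ g₂).toReal := ENNReal.toReal_nonneg
        have het : (0:ℝ) ≤ ε * t^2 := by positivity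
        set F : (X₁ ⊕ X₂) → ℝ :=
          Sum.elim (fun z => g₁ z - g₁ ξ₁ + 2*ε*t) (fun z => g₂ z - g₂ ξ₂) with hF
        have hF1 : F ∘ Sum.inl = fun z => g₁ z + (-(g₁ ξ₁) + 2*ε*t) := by
          funext z; simp only [hF, Function.comp_apply, Sum.elim_inl]; ring
        have hF2 : F ∘ Sum.inr = fun z => g₂ z + (-(g₂ ξ₂)) := by
          funext z; simp only [hF, Function.comp_apply, Sum.elim_inr]; ring
        have hEF : E F = ENNReal.ofReal ((E₁ g₁).toReal + (E₂ g₂).toReal + ε*t^2) := by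
          rw [hE, hF1, hF2, shift_eq_aux E₁ hconv₁ hlsc₁ hc₁ g₁ _,
            shift_eq_aux E₂ hconv₂ hlsc₂ hc₂ g₂ _]
          have hd : F (Sum.inl ξ₁) - F (Sum.inr ξ₂) = 2*ε*t := by
            simp only [hF, Sum.elim_inl, Sum.elim_inr]; ring
          rw [hd]
          have h2 : (1/(4*ε)) * |2*ε*t|^2 = ε*t^2 := by rw [sq_abs]; field_simp; ring
          rw [h2, ENNReal.ofReal_add (by linarith) het, ENNReal.ofReal_add he1 he2,
            ENNReal.ofReal_toReal hfin1, ENNReal.ofReal_toReal hfin2]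
        have hgain : t * (F (Sum.inl x₁) - F (Sum.inr x₂)) =
            t*(g₁ x₁ - g₁ ξ₁) + t*(g₂ ξ₂ - g₂ x₂) + 2*ε*t^2 := by
          simp only [hF, Sum.elim_inl, Sum.elim_inr]; ring
        have final : (ENNReal.ofReal (t*(g₁ x₁ - g₁ ξ₁)) - E₁ g₁)
            + (ENNReal.ofReal (t*(g₂ ξ₂ - g₂ x₂)) - E₂ g₂) + ENNReal.ofReal (ε * t ^ 2)
            = ENNReal.ofReal (t * (F (Sum.inl x₁) - F (Sum.inr x₂))) - E F := by
          rw [hEF, hgain, ← ENNReal.ofReal_sub _ (by linarith)]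
          conv_lhs => rw [← ENNReal.ofReal_toReal hfin1, ← ENNReal.ofReal_toReal hfin2]
          rw [← ENNReal.ofReal_sub _ he1, ← ENNReal.ofReal_sub _ he2,
            ← ENNReal.ofReal_add (sub_nonneg.mpr hd1) (sub_nonneg.mpr hd2),
            ← ENNReal.ofReal_add (by linarith [sub_nonneg.mpr hd1, sub_nonneg.mpr hd2]) het]
          congr 1
          ring
        rw [final]
        exact le_iSup
          (fun f => ENNReal.ofReal (t * (f (Sum.inl x₁) - f (Sum.inr x₂))) - E f) F
      have improve₁ : ∀ g₁ : X₁ → ℝ, ∃ g₁' : X₁ → ℝ, E₁ g₁' ≠ ⊤ ∧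
          (E₁ g₁').toReal ≤ t*(g₁' x₁ - g₁' ξ₁) ∧
          (ENNReal.ofReal (t*(g₁ x₁ - g₁ ξ₁)) - E₁ g₁) ≤
            (ENNReal.ofReal (t*(g₁' x₁ - g₁' ξ₁)) - E₁ g₁') := by
        intro g₁
        by_cases h : ENNReal.ofReal (t*(g₁ x₁ - g₁ ξ₁)) ≤ E₁ g₁
        · refine ⟨fun _ => 0, ?_, ?_, ?_⟩
          · rw [hc₁]; exact ENNReal.zero_ne_top
          · rw [hc₁]; simp
          · rw [tsub_eq_zero_of_le h]; exact zero_le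
        · push_neg at h
          refine ⟨g₁, ne_top_of_lt h, ?_, le_rfl⟩
          have hpos : 0 < ENNReal.ofReal (t*(g₁ x₁ - g₁ ξ₁)) := lt_of_le_of_lt zero_le h
          have hd0 : 0 < t*(g₁ x₁ - g₁ ξ₁) := ENNReal.ofReal_pos.mp hpos
          exact ENNReal.toReal_le_of_le_ofReal hd0.le h.le
      have improve₂ : ∀ g₂ : X₂ → ℝ, ∃ g₂' : X₂ → ℝ, E₂ g₂' ≠ ⊤ ∧
          (E₂ g₂').toReal ≤ t*(g₂' ξ₂ - g₂' x₂) ∧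
          (ENNReal.ofReal (t*(g₂ ξ₂ - g₂ x₂)) - E₂ g₂) ≤
            (ENNReal.ofReal (t*(g₂' ξ₂ - g₂' x₂)) - E₂ g₂') := by
        intro g₂
        by_cases h : ENNReal.ofReal (t*(g₂ ξ₂ - g₂ x₂)) ≤ E₂ g₂
        · refine ⟨fun _ => 0, ?_, ?_, ?_⟩
          · rw [hc₂]; exact ENNReal.zero_ne_top
          · rw [hc₂]; simp
          · rw [tsub_eq_zero_of_le h]; exact zero_le
        · push_neg at h
          refine ⟨g₂, ne_top_of_lt h, ?_, le_rfl⟩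
          have hpos : 0 < ENNReal.ofReal (t*(g₂ ξ₂ - g₂ x₂)) := lt_of_le_of_lt zero_le h
          have hd0 : 0 < t*(g₂ ξ₂ - g₂ x₂) := ENNReal.ofReal_pos.mp hpos
          exact ENNReal.toReal_le_of_le_ofReal hd0.le h.le
      have main : ∀ (g₁ : X₁ → ℝ) (g₂ : X₂ → ℝ),
          (ENNReal.ofReal (t*(g₁ x₁ - g₁ ξ₁)) - E₁ g₁) +
          ((ENNReal.ofReal (t*(g₂ ξ₂ - g₂ x₂)) - E₂ g₂) + ENNReal.ofReal (ε * t ^ 2)) ≤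
          tRes E t (Sum.inl x₁) (Sum.inr x₂) := by
        intro g₁ g₂
        obtain ⟨g₁', hf1, hd1, hle1⟩ := improve₁ g₁
        obtain ⟨g₂', hf2, hd2, hle2⟩ := improve₂ g₂
        refine le_trans (add_le_add hle1 (add_le_add hle2 le_rfl)) ?_
        have hcore := core g₁' g₂' hf1 hf2 hd1 hd2
        rwa [add_assoc] at hcore
      have h2 : tRes E₂ t ξ₂ x₂ + ENNReal.ofReal (ε * t ^ 2) =
          ⨆ g₂ : X₂ → ℝ, ((ENNReal.ofReal (t*(g₂ ξ₂ - g₂ x₂)) - E₂ g₂)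
            + ENNReal.ofReal (ε * t ^ 2)) := by
        unfold tRes
        exact ENNReal.iSup_add _
      rw [add_assoc, h2]
      exact ENNReal.iSup_add_iSup_le main
  exact ⟨⟨hconvE, hE0, hlscE, hfinE, hopE⟩, hconst, htres⟩
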